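/- Let k be a number field of degree d = [k:ℚ], let K/k be an extension of number fields of degree n, let r ≥ 1 be an integer, and let v : k → ℂ be a field embedding. Let σ_1,…,σ_n : K → ℂ be the n field embeddings of K extending v, and let ι : K^r → ℂ^{nr} send (α_1,…,α_r) to the tuple (σ_i(α_j))_{1 ≤ i ≤ n, 1 ≤ j ≤ r}. Let F be a nonzero polynomial in nr complex variables with complex coefficients. Then there exists α ∈ O_K^r with ‖α‖ ≤ (d·n·(deg F + 1)/2) · λ_max(K) and F(ι(α)) ≠ 0, where ‖(α_1,…,α_r)‖ := max_j ‖α_j‖ and deg F is the total degree of F. -/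

import Mathlib

open scoped Classical

noncomputable section

/-- The house of an element of a number field: the maximum of `|σ(α)|` over all field
embeddings `σ : K → ℂ`. -/
def house {K : Type*} [Field K] (α : K) : ℝ :=
  ⨆ σ : K →+* ℂ, ‖σ α‖

/-- `lambdaMax K` is the largest successive minimum of `𝓞_K` with respect to the house:
the least real `λ` such that `{α ∈ 𝓞_K : ‖α‖ ≤ λ}` contains `[K:ℚ]` many `ℚ`-linearly
independent elements. -/
def lambdaMax (K : Type*) [Field K] [NumberField K] : ℝ :=
  sInf {l : ℝ | ∃ v : Fin (Module.finrank ℚ K) → NumberField.RingOfIntegers K,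
    LinearIndependent ℚ (fun i => (v i : K)) ∧ ∀ i, house (v i : K) ≤ l}

lemma house_nonneg' {K : Type*} [Field K] (α : K) : 0 ≤ house α :=
  Real.iSup_nonneg fun σ => (norm_nonneg _)

lemma abs_le_house {K : Type*} [Field K] [NumberField K] (α : K) (σ : K →+* ℂ) :
    ‖σ α‖ ≤ house α :=
  le_ciSup (Set.Finite.bddAbove (Set.finite_range (fun σ : K →+* ℂ => ‖σ α‖))) σ

lemma house_le {K : Type*} [Field K] [NumberField K] {α : K} {C : ℝ}
    (h : ∀ σ : K →+* ℂ, ‖σ α‖ ≤ C) : house α ≤ C :=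
  ciSup_le h

open MvPolynomial in
lemma sz_fin : ∀ (N : ℕ) (F : MvPolynomial (Fin N) ℂ), F ≠ 0 → ∀ S : Finset ℂ,
    F.totalDegree < S.card → ∃ x : Fin N → ℂ, (∀ i, x i ∈ S) ∧ eval x F ≠ 0 := by
  intro N
  induction N with
  | zero =>
    intro F hF S _
    obtain ⟨c, rfl⟩ := C_surjective (Fin 0) F
    refine ⟨finZeroElim, fun i => i.elim0, ?_⟩
    rw [eval_C]
    exact fun hc => hF (by rw [hc, map_zero])
  | succ N ih =>
    intro F hF S hS
    set P := finSuccEquiv ℂ N F with hP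
    have hP0 : P ≠ 0 := fun h => hF <| (finSuccEquiv ℂ N).injective (by rw [← hP, h, map_zero])
    have hL : P.leadingCoeff ≠ 0 := Polynomial.leadingCoeff_ne_zero.mpr hP0
    have hLdeg : P.leadingCoeff.totalDegree < S.card := by
      refine lt_of_le_of_lt ?_ hS
      have h2 := totalDegree_coeff_finSuccEquiv_add_le F P.natDegree
        (by rw [← hP, Polynomial.coeff_natDegree]; exact hL)
      rw [← hP] at h2
      exact le_trans (Nat.le_add_right _ _) h2
    obtain ⟨y, hyS, hy⟩ := ih P.leadingCoeff hL S hLdeg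
    set q := P.map (MvPolynomial.eval y) with hq
    have hq0 : q ≠ 0 := fun h => hy (by
      have h2 : q.coeff P.natDegree = 0 := by rw [h, Polynomial.coeff_zero]
      rw [hq, Polynomial.coeff_map, ← Polynomial.leadingCoeff] at h2
      exact h2)
    have hqdeg : q.natDegree < S.card := by
      refine lt_of_le_of_lt (le_trans Polynomial.natDegree_map_le ?_) hS
      rw [hP, natDegree_finSuccEquiv]
      exact degreeOf_le_totalDegree F 0
    have hex : ∃ s ∈ S, Polynomial.eval s q ≠ 0 := by
      by_contra h
      push_neg at h
      have hsub : S ⊆ q.roots.toFinset := fun s hs =>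
        Multiset.mem_toFinset.mpr (Polynomial.mem_roots'.mpr ⟨hq0, h s hs⟩)
      have h1 := Finset.card_le_card hsub
      have h2 := Multiset.toFinset_card_le q.roots
      have h3 := Polynomial.card_roots' q
      omega
    obtain ⟨s, hsS, hs⟩ := hex
    refine ⟨Fin.cons s y, fun i => ?_, ?_⟩
    · refine Fin.cases ?_ ?_ i
      · exact hsS
      · exact fun j => hyS j
    · rw [eval_eq_eval_mv_eval', ← hP]
      exact hs

open MvPolynomial in
lemma sz {ι : Type*} [Fintype ι] (F : MvPolynomial ι ℂ) (hF : F ≠ 0) (S : Finset ℂ)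
    (h : F.totalDegree < S.card) :
    ∃ x : ι → ℂ, (∀ i, x i ∈ S) ∧ eval x F ≠ 0 := by
  set eqv := Fintype.equivFin ι
  have hne : rename eqv F ≠ 0 := fun h0 =>
    hF (by simpa using (rename_injective _ eqv.injective) (h0.trans (map_zero _).symm))
  obtain ⟨x, hx, hne2⟩ := sz_fin _ (rename eqv F) hne S
    (lt_of_le_of_lt (totalDegree_rename_le _ _) h)
  refine ⟨x ∘ eqv, fun i => hx _, ?_⟩
  rwa [← eval_rename]

lemma exists_lambdaMax_witness (K : Type*) [Field K] [NumberField K] :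
    ∃ v : Fin (Module.finrank ℚ K) → NumberField.RingOfIntegers K,
      LinearIndependent ℚ (fun i => (v i : K)) ∧ ∀ i, house (v i : K) ≤ lambdaMax K := by
  classical
  have hm0 : 0 < Module.finrank ℚ K := Module.finrank_pos
  have hne : Nonempty (Fin (Module.finrank ℚ K)) := ⟨⟨0, hm0⟩⟩
  set S : Set ℝ := {l : ℝ | ∃ v : Fin (Module.finrank ℚ K) → NumberField.RingOfIntegers K,
    LinearIndependent ℚ (fun i => (v i : K)) ∧ ∀ i, house (v i : K) ≤ l} with hSdef
  have hcard : Fintype.card (Module.Free.ChooseBasisIndex ℤ (NumberField.RingOfIntegers K))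
      = Module.finrank ℚ K := (Module.finrank_eq_card_basis (NumberField.integralBasis K)).symm
  set eqv := (Fintype.equivFinOfCardEq hcard).symm with heqv
  set v0 : Fin (Module.finrank ℚ K) → NumberField.RingOfIntegers K :=
    fun i => NumberField.RingOfIntegers.basis K (eqv i) with hv0def
  have hv0 : LinearIndependent ℚ (fun i => (v0 i : K)) := by
    have h1 : (fun i => (v0 i : K)) = (fun j => NumberField.integralBasis K j) ∘ eqv := by
      funext i
      simp [hv0def, NumberField.integralBasis_apply]
    rw [h1]
    exact ((NumberField.integralBasis K).linearIndependent).comp eqv eqv.injective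
  set B := Finset.univ.sup' Finset.univ_nonempty (fun i => house (v0 i : K)) with hB
  have hBS : B ∈ S := by
    refine ⟨v0, hv0, fun i => ?_⟩
    rw [hB]
    exact Finset.le_sup' (fun i => house ((v0 i : K))) (Finset.mem_univ i)
  have hbig : {x : K | IsIntegral ℤ x ∧ ∀ φ : K →+* ℂ, ‖φ x‖ ≤ B}.Finite :=
    NumberField.Embeddings.finite_of_norm_le K ℂ B
  set A : Set (NumberField.RingOfIntegers K) := {x | house (x : K) ≤ B} with hA
  have hAfin : A.Finite := by
    refine Set.Finite.subset (Set.Finite.preimage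
      (Set.injOn_of_injective (NumberField.RingOfIntegers.coe_injective (K := K))) hbig) ?_
    intro x hx
    refine ⟨x.isIntegral_coe, fun φ => le_trans ?_ hx⟩
    exact abs_le_house _ φ
  set H : Finset ℝ := Finset.image (fun x : NumberField.RingOfIntegers K => house (x : K)) hAfin.toFinset with hH
  set W := H.filter (fun l => l ∈ S) with hW
  obtain ⟨i0, -, hi0⟩ := Finset.exists_mem_eq_sup' (Finset.univ_nonempty)
    (fun i => house (v0 i : K))
  have hBW : B ∈ W := by
    refine Finset.mem_filter.mpr ⟨?_, hBS⟩
    refine Finset.mem_image.mpr ⟨v0 i0, ?_, hi0.symm⟩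
    rw [Set.Finite.mem_toFinset]
    show house ((v0 i0 : K)) ≤ B
    rw [hB]
    exact Finset.le_sup' (fun i => house ((v0 i : K))) (Finset.mem_univ i0)
  set w := W.min' ⟨B, hBW⟩ with hw
  have hwW : w ∈ W := Finset.min'_mem _ _
  have hwS : w ∈ S := (Finset.mem_filter.mp hwW).2
  have hwlb : ∀ l ∈ S, w ≤ l := by
    intro l hl
    obtain ⟨v, hvli, hvh⟩ := hl
    by_cases hlB : B ≤ l
    · exact le_trans (Finset.min'_le _ _ hBW) hlB
    · push_neg at hlB
      obtain ⟨j0, -, hj0⟩ := Finset.exists_mem_eq_sup' (Finset.univ_nonempty)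
        (fun i => house (v i : K))
      have hmvS : (Finset.univ.sup' Finset.univ_nonempty (fun i => house (v i : K))) ∈ S :=
        ⟨v, hvli, fun i => Finset.le_sup' (fun i => house (v i : K)) (Finset.mem_univ i)⟩
      have hmvH : (Finset.univ.sup' Finset.univ_nonempty (fun i => house (v i : K))) ∈ H := by
        refine Finset.mem_image.mpr ⟨v j0, ?_, hj0.symm⟩
        rw [Set.Finite.mem_toFinset]
        exact le_trans (hvh j0) hlB.le
      refine le_trans (Finset.min'_le _ _ (Finset.mem_filter.mpr ⟨hmvH, hmvS⟩)) ?_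
      exact Finset.sup'_le _ _ fun i _ => hvh i
  have hinf : w ≤ lambdaMax K := le_csInf ⟨B, hBS⟩ hwlb
  obtain ⟨v, h1, h2⟩ := hwS
  exact ⟨v, h1, fun i => le_trans (h2 i) hinf⟩

/-- **Integral points avoiding a hypersurface** (Proposition 3.5): let `k` be a number field
of degree `d`, `K/k` an extension of degree `n`, `r ≥ 1`, `v : k → ℂ` an embedding and
`σ_1,…,σ_n : K → ℂ` (enumerated by `e`) the `n` embeddings of `K` extending `v`; let
`ι : K^r → ℂ^{nr}` be `(α_1,…,α_r) ↦ (σ_i(α_j))`. For every nonzero polynomial `F` in `nr`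
complex variables there is `α ∈ 𝓞_K^r` with `‖α‖ ≤ (dn(deg F + 1)/2)·λ_max(K)` and
`F(ι(α)) ≠ 0`. -/
theorem exists_integral_point_avoiding_hypersurface (k K : Type*) [Field k] [NumberField k]
    [Field K] [NumberField K] [Algebra k K] (n d r : ℕ) (hn : Module.finrank k K = n)
    (hd : Module.finrank ℚ k = d) (hr : 1 ≤ r) (v : k →+* ℂ)
    (e : Fin n ≃ {ψ : K →+* ℂ // ψ.comp (algebraMap k K) = v})
    (F : MvPolynomial (Fin n × Fin r) ℂ) (hF : F ≠ 0) :
    ∃ α : Fin r → NumberField.RingOfIntegers K,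
      (∀ j, house (α j : K) ≤
        (d : ℝ) * (n : ℝ) * ((F.totalDegree : ℝ) + 1) / 2 * lambdaMax K) ∧
      MvPolynomial.eval (fun p => (e p.1).1 (α p.2 : K)) F ≠ 0 := by
  classical
  set m := Module.finrank ℚ K with hm
  obtain ⟨θ, hθli, hθh⟩ := exists_lambdaMax_witness K
  have hm0 : 0 < m := Module.finrank_pos
  haveI : Nonempty (Fin m) := ⟨⟨0, hm0⟩⟩
  have hlam0 : 0 ≤ lambdaMax K := le_trans (house_nonneg' _) (hθh ⟨0, hm0⟩)
  have hdnm : d * n = m := by rw [← hd, ← hn, hm]; exact Module.finrank_mul_finrank ℚ k K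
  set D := F.totalDegree with hD
  set T : ℕ := (D + 1) / 2 with hT
  set σfun : Fin n → (K →+* ℂ) := fun i => (e i).1 with hσ
  have hσinj : Function.Injective σfun := fun i j h => e.injective (Subtype.ext h)
  set sub : Fin n × Fin r → MvPolynomial (Fin m × Fin r) ℂ :=
    fun p => ∑ l : Fin m, MvPolynomial.C (σfun p.1 (θ l : K)) * MvPolynomial.X (l, p.2) with hsub
  set G := MvPolynomial.bind₁ sub F with hGdef
  -- evaluation identity
  have heval : ∀ y : (Fin m × Fin r) → ℂ,
      MvPolynomial.eval y G =
        MvPolynomial.eval (fun p => ∑ l : Fin m, σfun p.1 (θ l : K) * y (l, p.2)) F := by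
    intro y
    rw [hGdef]
    rw [show (MvPolynomial.eval y) = MvPolynomial.eval₂Hom (RingHom.id ℂ) y from rfl]
    rw [MvPolynomial.eval₂Hom_bind₁]
    show MvPolynomial.eval (fun p => MvPolynomial.eval y (sub p)) F = _
    refine congrArg (fun gg : (Fin n × Fin r) → ℂ => MvPolynomial.eval gg F) ?_
    funext p
    simp [hsub]
  -- F has a nonvanishing point
  obtain ⟨x0, hx0⟩ : ∃ x : (Fin n × Fin r) → ℂ, MvPolynomial.eval x F ≠ 0 := by
    by_contra h
    push_neg at h
    exact hF (MvPolynomial.funext fun x => by rw [h x, map_zero])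
  -- surjectivity of the embedding matrix
  set M : Matrix (Fin n) (Fin m) ℂ := Matrix.of (fun i l => σfun i (θ l : K)) with hM
  have hTsurj : Function.Surjective M.mulVecLin := by
    rw [← LinearMap.range_eq_top]
    by_contra hne
    obtain ⟨f, hf0, hfbot⟩ := Submodule.exists_dual_map_eq_bot_of_lt_top
      (lt_top_iff_ne_top.mpr hne) inferInstance
    set c : Fin n → ℂ := fun i => f (fun j => if i = j then 1 else 0) with hc
    have hker : ∀ z : Fin m → ℂ, f (M.mulVecLin z) = 0 := by
      intro z
      have hmem : f (M.mulVecLin z) ∈ (LinearMap.range M.mulVecLin).map f :=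
        Submodule.mem_map_of_mem (LinearMap.mem_range_self _ z)
      rw [hfbot] at hmem
      exact hmem
    have hrow : ∀ l : Fin m, ∑ i : Fin n, c i * σfun i (θ l : K) = 0 := by
      intro l
      have h1 := hker (Pi.single l 1)
      rw [LinearMap.pi_apply_eq_sum_univ f] at h1
      rw [← h1]
      refine Finset.sum_congr rfl fun i _ => ?_
      have h2 : M.mulVecLin (Pi.single l 1) i = σfun i (θ l : K) := by
        rw [Matrix.mulVecLin_apply, Matrix.mulVec_single]
        simp [hM]
      rw [h2, smul_eq_mul, mul_comm]
    -- Dedekind's independence of characters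
    have hchar : LinearIndependent ℂ (fun i : Fin n => ((σfun i).toMonoidHom : K → ℂ)) :=
      (linearIndependent_monoidHom K ℂ).comp (fun i => (σfun i).toMonoidHom)
        (fun i j h => hσinj (RingHom.ext fun x => DFunLike.congr_fun h x))
    set g : K →ₗ[ℚ] ℂ := ∑ i : Fin n, c i • ((σfun i).toAddMonoidHom.toRatLinearMap) with hg
    have hgx : ∀ x : K, g x = ∑ i : Fin n, c i * σfun i x := by
      intro x
      rw [hg, LinearMap.sum_apply]
      refine Finset.sum_congr rfl fun i _ => ?_
      rw [LinearMap.smul_apply, smul_eq_mul]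
      rfl
    have hcardfin : Fintype.card (Fin m) = Module.finrank ℚ K := by simp [hm]
    set bK := basisOfLinearIndependentOfCardEqFinrank hθli hcardfin with hbK
    have hbKl : ∀ l, bK l = (θ l : K) :=
      fun l => congrFun (coe_basisOfLinearIndependentOfCardEqFinrank hθli hcardfin) l
    have hg0 : g = 0 := by
      refine bK.ext fun l => ?_
      rw [hbKl l, hgx, LinearMap.zero_apply]
      exact hrow l
    have hc0 : ∀ i, c i = 0 := by
      refine Fintype.linearIndependent_iff.mp hchar c ?_
      funext x
      have := hgx x
      rw [hg0, LinearMap.zero_apply] at this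
      simpa [Finset.sum_apply] using this.symm
    apply hf0
    refine LinearMap.ext fun z => ?_
    rw [LinearMap.pi_apply_eq_sum_univ f z]
    simp only [LinearMap.zero_apply]
    refine Finset.sum_eq_zero fun i _ => ?_
    rw [show f (fun j => if i = j then 1 else 0) = c i from rfl, hc0, smul_zero]
  -- G is nonzero
  have hG0 : G ≠ 0 := by
    intro h0
    have hz : ∀ j : Fin r, ∃ z : Fin m → ℂ, M.mulVecLin z = fun i => x0 (i, j) :=
      fun j => hTsurj _
    choose z hzz using hz
    have h1 := heval (fun p => z p.2 p.1)
    rw [h0, map_zero] at h1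
    apply hx0
    have h2 : (fun p : Fin n × Fin r => ∑ l : Fin m, σfun p.1 (θ l : K) * z p.2 l) = x0 := by
      funext p
      have h3 := congrFun (hzz p.2) p.1
      rw [Matrix.mulVecLin_apply] at h3
      simpa [Matrix.mulVec, dotProduct, hM] using h3
    rw [← h2, ← h1]
  -- degree bound for G
  have hdegG : G.totalDegree ≤ D := by
    have hFsum : G = ∑ s ∈ F.support, MvPolynomial.bind₁ sub
        (MvPolynomial.monomial s (MvPolynomial.coeff s F)) := by
      rw [hGdef]
      conv_lhs => rw [MvPolynomial.as_sum F]
      rw [map_sum]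
    rw [hFsum]
    refine le_trans (MvPolynomial.totalDegree_finset_sum _ _) (Finset.sup_le fun s hs => ?_)
    rw [MvPolynomial.bind₁_monomial]
    refine le_trans (MvPolynomial.totalDegree_mul _ _) ?_
    rw [MvPolynomial.totalDegree_C, zero_add]
    refine le_trans (MvPolynomial.totalDegree_finset_prod _ _) ?_
    have hsub1 : ∀ p : Fin n × Fin r, (sub p).totalDegree ≤ 1 := by
      intro p
      refine le_trans (MvPolynomial.totalDegree_finset_sum _ _) (Finset.sup_le fun l _ => ?_)
      refine le_trans (MvPolynomial.totalDegree_mul _ _) ?_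
      rw [MvPolynomial.totalDegree_C, zero_add]
      exact le_of_eq (MvPolynomial.totalDegree_X _)
    calc ∑ p ∈ s.support, (sub p ^ s p).totalDegree
        ≤ ∑ p ∈ s.support, s p * 1 :=
          Finset.sum_le_sum fun p _ => le_trans (MvPolynomial.totalDegree_pow _ _)
            (Nat.mul_le_mul_left _ (hsub1 p))
      _ = ∑ p ∈ s.support, s p := by simp
      _ ≤ D := MvPolynomial.le_totalDegree hs
  -- the grid
  set Sgrid : Finset ℂ := (Finset.Icc (-(T:ℤ)) (T:ℤ)).image (fun b : ℤ => (b : ℂ)) with hSg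
  have hcardS : D < Sgrid.card := by
    rw [hSg, Finset.card_image_of_injective _ (fun x y h => by exact_mod_cast h)]
    rw [Int.card_Icc]
    have : ((T:ℤ) + 1 - -(T:ℤ)).toNat = 2 * T + 1 := by omega
    rw [this, hT]
    omega
  obtain ⟨y, hyS, hyG⟩ := sz G hG0 Sgrid (lt_of_le_of_lt hdegG hcardS)
  have hya : ∀ p, ∃ b ∈ Finset.Icc (-(T:ℤ)) (T:ℤ), (b : ℂ) = y p := by
    intro p
    obtain ⟨b, hb1, hb2⟩ := Finset.mem_image.mp (hyS p)
    exact ⟨b, hb1, hb2⟩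
  choose a ha hay using hya
  have hcoe : ∀ j : Fin r, ∀ φ : K →+* ℂ,
      φ ((∑ l : Fin m, a (l, j) • θ l : NumberField.RingOfIntegers K) : K)
        = ∑ l : Fin m, (a (l, j) : ℂ) * φ (θ l : K) := by
    intro j φ
    rw [NumberField.RingOfIntegers.coe_eq_algebraMap, map_sum, map_sum]
    refine Finset.sum_congr rfl fun l _ => ?_
    rw [map_zsmul, map_zsmul, zsmul_eq_mul, NumberField.RingOfIntegers.coe_eq_algebraMap]
  refine ⟨fun j => ∑ l : Fin m, a (l, j) • θ l, ?_, ?_⟩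
  · intro j
    have hstep : house ((∑ l : Fin m, a (l, j) • θ l : NumberField.RingOfIntegers K) : K)
        ≤ (m : ℝ) * ((T : ℝ) * lambdaMax K) := by
      refine house_le fun φ => ?_
      rw [hcoe j φ]
      refine le_trans (norm_sum_le _ _) ?_
      have hterm : ∀ l : Fin m, ‖(a (l, j) : ℂ) * φ (θ l : K)‖
          ≤ (T : ℝ) * lambdaMax K := by
        intro l
        rw [norm_mul]
        have h1 : ‖((a (l, j) : ℂ))‖ ≤ (T : ℝ) := by
          have := Finset.mem_Icc.mp (ha (l, j))
          have habs : |a (l, j)| ≤ (T : ℤ) := abs_le.mpr this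
          calc ‖((a (l, j) : ℂ))‖ = |((a (l, j) : ℝ))| := by
                exact Complex.norm_intCast _
            _ ≤ (T : ℝ) := by
                rw [← Int.cast_abs]
                exact_mod_cast habs
        have h2 : ‖φ (θ l : K)‖ ≤ lambdaMax K :=
          le_trans (abs_le_house _ φ) (hθh l)
        exact mul_le_mul h1 h2 (norm_nonneg _) (Nat.cast_nonneg T)
      calc ∑ l : Fin m, ‖(a (l, j) : ℂ) * φ (θ l : K)‖
          ≤ ∑ _l : Fin m, (T : ℝ) * lambdaMax K := Finset.sum_le_sum fun l _ => hterm l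
        _ = (m : ℝ) * ((T : ℝ) * lambdaMax K) := by
            rw [Finset.sum_const, Finset.card_univ, Fintype.card_fin, nsmul_eq_mul]
    refine le_trans hstep ?_
    have hmdn : (m : ℝ) = (d : ℝ) * (n : ℝ) := by rw [← hdnm]; push_cast; ring
    have hTle : (T : ℝ) ≤ ((D : ℝ) + 1) / 2 := by
      rw [hT]
      calc (((D + 1) / 2 : ℕ) : ℝ) ≤ ((D + 1 : ℕ) : ℝ) / 2 := Nat.cast_div_le
        _ = ((D : ℝ) + 1) / 2 := by push_cast; ring
    calc (m : ℝ) * ((T : ℝ) * lambdaMax K)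
        ≤ (m : ℝ) * ((((D : ℝ) + 1) / 2) * lambdaMax K) := by
          refine mul_le_mul_of_nonneg_left ?_ (Nat.cast_nonneg m)
          exact mul_le_mul_of_nonneg_right hTle hlam0
      _ = (d : ℝ) * (n : ℝ) * (((D : ℝ)) + 1) / 2 * lambdaMax K := by
          rw [hmdn]; ring
  · have hkey : MvPolynomial.eval
        (fun p : Fin n × Fin r => (e p.1).1 ((∑ l : Fin m, a (l, p.2) • θ l :
          NumberField.RingOfIntegers K) : K)) F = MvPolynomial.eval y G := by
      rw [heval y]
      refine congrArg (fun gg : (Fin n × Fin r) → ℂ => MvPolynomial.eval gg F) ?_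
      funext p
      rw [show ((e p.1).1 : K →+* ℂ) = σfun p.1 from rfl, hcoe p.2 (σfun p.1)]
      refine Finset.sum_congr rfl fun l _ => ?_
      rw [hay (l, p.2)]
      ring
    rw [hkey]
    exact hyG
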